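/- arXiv:2108.00157 — 5 statements merged into one kernel-verified Lean document; each statement's English description precedes it below -/
import Mathlib

section
/- Let b, c : ℕ → ℍ be sequences of quaternions and q ∈ ℍ with Σ_n |b_n||q|^n < ∞ and Σ_n |c_n||q|^n < ∞. If F_b(q) ≠ 0, then F_{b⋆c}(q) = F_b(q) · F_c(F_b(q)⁻¹ q F_b(q)); if F_b(q) = 0, then F_{b⋆c}(q) = 0. -/
/-!
Expanding `q ^ n * (b ⋆ c)_n` as `q ^ (n - k) * (q ^ k * b k) * c (n - k)` and regrouping the
absolutely convergent double series by the power of `q` standing in front of `c` gives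
`F_{b⋆c}(q) = Σ_m q ^ m * F_b(q) * c_m`. When `a = F_b(q)` is nonzero, `q ^ m * a = a * (a⁻¹ q a) ^ m`
moves `a` to the left of the whole series, leaving `F_c(a⁻¹ q a)`.
-/
noncomputable section

local notation "ℍ" => Quaternion ℝ

/-- The power series function `F_c(q) = Σ_n q^n c_n` associated to a coefficient
sequence `c : ℕ → ℍ`. -/
def Fc (c : ℕ → ℍ) (q : ℍ) : ℍ := ∑' n, q ^ n * c n

/-- Cauchy product `(b ⋆ c)_n = Σ_{k=0}^n b_k c_{n-k}` of coefficient sequences,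
i.e. the coefficient sequence of the slice `*`-product. -/
def cprod (b c : ℕ → ℍ) : ℕ → ℍ := fun n => ∑ k ∈ Finset.range (n + 1), b k * c (n - k)

/-- Coefficient sequence `ε(a)_n = √(1-|a|²) conj(a)^n` of the slice normalized
Szegő kernel `e_a`. -/
def eps (a : ℍ) : ℕ → ℍ := fun n => Real.sqrt (1 - ‖a‖ ^ 2) • (star a) ^ n

open scoped Classical in
/-- Coefficient sequence `β(a)` of the slice Blaschke factor `B_a`:
`β(a)_0 = a²/|a|`, `β(a)_n = -conj(a)^{n-1}(1-|a|²)(a/|a|)` for `n ≥ 1`,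
with the convention `β(0)_n = 1` iff `n = 1` (that is, `B_0(q) = q`). -/
def betaC (a : ℍ) : ℕ → ℍ :=
  if a = 0 then fun n => if n = 1 then 1 else 0
  else fun n =>
    if n = 0 then a ^ 2 / (‖a‖ : ℍ)
    else -((star a) ^ (n - 1) * ((1 - ‖a‖ ^ 2 : ℝ) : ℍ) * (a / (‖a‖ : ℍ)))

/-- The identity for the Cauchy product: coefficient sequence of the constant `1`. -/
def deltaSeq : ℕ → ℍ := fun n => if n = 0 then 1 else 0

/-- Coefficient sequence of the Blaschke product `B_{a_0} * ⋯ * B_{a_{k-1}}`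
(0-indexed; `Bprod a 0` is the empty product, i.e. the constant `1`). -/
def Bprod (a : ℕ → ℍ) : ℕ → (ℕ → ℍ)
  | 0 => deltaSeq
  | k + 1 => cprod (Bprod a k) (betaC (a k))

/-- Coefficient sequence of the `k`-th slice Takenaka–Malmquist function
`T_{k+1} = B_{a_0} * ⋯ * B_{a_{k-1}} * e_{a_k}` (0-indexed). -/
def tau (a : ℕ → ℍ) (k : ℕ) : ℕ → ℍ := cprod (Bprod a k) (eps (a k))

/-- `e^{It} = cos t + I sin t`. -/
def expI (I : ℍ) (t : ℝ) : ℍ := ((Real.cos t : ℝ) : ℍ) + ((Real.sin t : ℝ) : ℍ) * I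

open Finset

theorem Summable.tsum_eq_tsum_sum_antidiagonal {A α : Type*} [AddCommMonoid A] [HasAntidiagonal A]
    [AddCommMonoid α] [TopologicalSpace α] [ContinuousAdd α] [T3Space α] {f : A × A → α}
    (hf : Summable f) :
    ∑' p, f p = ∑' n, ∑ p ∈ antidiagonal n, f p := by
  rw [← HasAntidiagonal.sigmaAntidiagonalEquivProd.tsum_eq f]
  refine (Summable.tsum_sigma' (f := fun x => f (HasAntidiagonal.sigmaAntidiagonalEquivProd x))
    (fun n => (hasSum_fintype _).summable)
      (HasAntidiagonal.sigmaAntidiagonalEquivProd.summable_iff.mpr hf)).trans ?_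
  congr 1 with n
  rw [tsum_fintype]
  exact Finset.sum_coe_sort (antidiagonal n) f

section NormedRing

variable {R : Type*} [NormedRing R] [NormOneClass R] {q : R} {b c : ℕ → R}

theorem norm_pow_mul_le (q b : R) (n : ℕ) : ‖q ^ n * b‖ ≤ ‖b‖ * ‖q‖ ^ n := by
  grw [norm_mul_le, norm_pow_le, mul_comm]

theorem summable_pow_mul_of_summable_norm_mul_pow [CompleteSpace R]
    (hb : Summable fun n => ‖b n‖ * ‖q‖ ^ n) : Summable fun n => q ^ n * b n :=
  .of_norm_bounded hb fun n => norm_pow_mul_le q (b n) n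

theorem summable_pow_mul_pow_mul_mul [CompleteSpace R] (hb : Summable fun n => ‖b n‖ * ‖q‖ ^ n)
    (hc : Summable fun n => ‖c n‖ * ‖q‖ ^ n) :
    Summable fun p : ℕ × ℕ => q ^ p.2 * (q ^ p.1 * b p.1) * c p.2 := by
  refine .of_norm_bounded (hb.mul_of_nonneg hc (fun _ => by positivity) fun _ => by positivity)
    fun p => ?_
  calc ‖q ^ p.2 * (q ^ p.1 * b p.1) * c p.2‖
      ≤ ‖b p.1‖ * ‖q‖ ^ p.1 * ‖q‖ ^ p.2 * ‖c p.2‖ := by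
        grw [norm_mul_le, norm_pow_mul_le, norm_pow_mul_le]
    _ = ‖b p.1‖ * ‖q‖ ^ p.1 * (‖c p.2‖ * ‖q‖ ^ p.2) := by ring

theorem tsum_pow_mul_sum_range_eq_tsum_pow_mul_tsum_mul [CompleteSpace R]
    (hb : Summable fun n => ‖b n‖ * ‖q‖ ^ n) (hc : Summable fun n => ‖c n‖ * ‖q‖ ^ n) :
    ∑' n, q ^ n * ∑ k ∈ range (n + 1), b k * c (n - k) =
      ∑' m, q ^ m * (∑' k, q ^ k * b k) * c m := by
  set f : ℕ × ℕ → R := fun p => q ^ p.2 * (q ^ p.1 * b p.1) * c p.2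
  have hf : Summable f := summable_pow_mul_pow_mul_mul hb hc
  calc ∑' n, q ^ n * ∑ k ∈ range (n + 1), b k * c (n - k)
      = ∑' n, ∑ p ∈ antidiagonal n, f p := by
        congr 1 with n
        rw [Nat.sum_antidiagonal_eq_sum_range_succ (fun k m => f (k, m)), mul_sum]
        refine sum_congr rfl fun k hk => ?_
        show q ^ n * (b k * c (n - k)) = q ^ (n - k) * (q ^ k * b k) * c (n - k)
        rw [← mul_assoc (q ^ (n - k)), ← pow_add, Nat.sub_add_cancel (mem_range_succ_iff.mp hk),
          mul_assoc]
    _ = ∑' p, f p := hf.tsum_eq_tsum_sum_antidiagonal.symm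
    _ = ∑' m, ∑' k, f (k, m) := by
        rw [hf.tsum_prod, Summable.tsum_comm (f := fun k m => f (k, m)) hf]
    _ = ∑' m, q ^ m * (∑' k, q ^ k * b k) * c m := by
        have hbq := summable_pow_mul_of_summable_norm_mul_pow hb
        congr 1 with m
        show ∑' k, q ^ m * (q ^ k * b k) * c m = _
        rw [(hbq.mul_left _).tsum_mul_right, hbq.tsum_mul_left]

end NormedRing

theorem pow_mul_eq_mul_conj_pow {G : Type*} [GroupWithZero G] {a : G} (ha : a ≠ 0) (q : G)
    (m : ℕ) : q ^ m * a = a * (a⁻¹ * q * a) ^ m := by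
  rw [GroupWithZero.conj_pow₀ ha, ← mul_assoc, ← mul_assoc, mul_inv_cancel₀ ha, one_mul]

/-- the `*`-product formula `(f*g)(q) = f(q) g(f(q)⁻¹ q f(q))` when
`f(q) ≠ 0`, and `(f*g)(q) = 0` when `f(q) = 0`; here `f = F_b`, `g = F_c`. -/
theorem starProduct_eval (b c : ℕ → ℍ) (q : ℍ)
    (hb : Summable fun n => ‖b n‖ * ‖q‖ ^ n)
    (hc : Summable fun n => ‖c n‖ * ‖q‖ ^ n) :
    (Fc b q ≠ 0 →
      Fc (cprod b c) q = Fc b q * Fc c ((Fc b q)⁻¹ * q * Fc b q)) ∧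
    (Fc b q = 0 → Fc (cprod b c) q = 0) := by
  have hprod : Fc (cprod b c) q = ∑' m, q ^ m * Fc b q * c m :=
    tsum_pow_mul_sum_range_eq_tsum_pow_mul_tsum_mul hb hc
  refine ⟨fun hF => ?_, fun hF => by simp [hprod, hF]⟩
  calc Fc (cprod b c) q
      = ∑' m, Fc b q * (((Fc b q)⁻¹ * q * Fc b q) ^ m * c m) := by
        simp_rw [hprod, pow_mul_eq_mul_conj_pow hF, mul_assoc]
    _ = Fc b q * Fc c ((Fc b q)⁻¹ * q * Fc b q) := tsum_mul_left
end
end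

section
/- (Slice Cauchy formula.) Let c : ℕ → ℍ and r > 0 with Σ_n |c_n| r^n < ∞. Then for every q ∈ ℍ with |q| < r and every I ∈ 𝕊, the quaternion q² − 2r cos(t) q + r² is invertible for every t, and F_c(q) = (1/2π) ∫₀^{2π} (q² − 2 r cos(t) q + r²)⁻¹ (r e^{−It} − q) · r e^{It} · F_c(r e^{It}) dt. -/
noncomputable section

local notation "ℍ" => Quaternion ℝ

/-!
For `s ∈ ℍ` the quadratic `Δ_s(q) = q² − 2 Re(s) q + |s|²` has real (hence central) coefficients
and `s` is a root of it, so every solution `G` of the Sylvester equation `G s = 1 + q G` satisfies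
`Δ_s(q) G = s̄ − q`. For `|q| < |s|` such a solution is `G = (Σ qⁿ s⁻ⁿ) s⁻¹`; as `s̄ ≠ q` this
shows `Δ_s(q) ≠ 0`, and the slice Cauchy kernel `Δ_s(q)⁻¹ (s̄ − q) s` is `Σ qⁿ s⁻ⁿ`.
On the circle `s = r e^{It}` the integrand therefore expands into the absolutely convergent double
series `Σ qⁿ s^{m−n} c_m`; `Complex.lift` identifies the slice `ℝ + ℝI` isometrically with `ℂ`,
where `∫₀^{2π} e^{ikt} dt` vanishes unless `k = 0`, so termwise integration keeps only `m = n`.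
-/

theorem HasSum.ite_eq_diag {α β : Type*} [AddCommMonoid α] [TopologicalSpace α] [DecidableEq β]
    {f : β → α} {a : α} (h : HasSum f a) :
    HasSum (fun p : β × β => if p.1 = p.2 then f p.1 else 0) a := by
  have hdiag : Function.Injective fun b : β => (b, b) := fun _ _ hb => (Prod.ext_iff.1 hb).1
  refine (hdiag.hasSum_iff fun p hp => if_neg fun h12 => hp ⟨p.1, Prod.ext rfl h12⟩).1 ?_
  simpa [Function.comp_def] using h

theorem tsum_pow_mul_pow_eq_one_add {R : Type*} [Ring R] [TopologicalSpace R]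
    [IsTopologicalRing R] [T2Space R] {q w : R} (h : Summable fun n => q ^ n * w ^ n) :
    ∑' n, q ^ n * w ^ n = 1 + q * (∑' n, q ^ n * w ^ n) * w := by
  rw [← h.tsum_mul_left, ← (h.mul_left q).tsum_mul_right]
  nth_rw 1 [h.tsum_eq_zero_add]
  simp only [pow_zero, mul_one]
  exact congrArg _ (tsum_congr fun n => by rw [pow_succ', pow_succ]; simp only [mul_assoc])

theorem quadratic_mul_eq_of_mul_eq_one_add_mul {R : Type*} [Ring R] {q G s σ π : R}
    (hG : G * s = 1 + q * G) (hσ : Commute σ G) (hπ : Commute π G)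
    (hs : s ^ 2 - σ * s + π = 0) :
    (q ^ 2 - σ * q + π) * G = σ - s - q := by
  have hqG : q * G = G * s - 1 := by rw [hG]; abel
  calc (q ^ 2 - σ * q + π) * G = q * (q * G) - σ * (q * G) + π * G := by noncomm_ring
    _ = q * (G * s - 1) - σ * (G * s - 1) + G * π := by rw [hqG, hπ.eq]
    _ = (q * G) * s - q - (σ * G) * s + σ + G * π := by noncomm_ring
    _ = (G * s - 1) * s - q - (G * σ) * s + σ + G * π := by rw [hqG, hσ.eq]
    _ = G * (s ^ 2 - σ * s + π) + (σ - s - q) := by noncomm_ring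
    _ = σ - s - q := by rw [hs, mul_zero, zero_add]

theorem Quaternion.re_eq_zero_of_mul_self_eq_neg_one {I : ℍ} (hI : I * I = -1) : I.re = 0 := by
  have hnorm : ‖I‖ = 1 := by
    have h := congrArg norm hI
    rw [norm_mul, norm_neg, norm_one] at h
    nlinarith [norm_nonneg I]
  rw [← Quaternion.sq_eq_neg_normSq, Quaternion.normSq_eq_norm_mul_self, hnorm, sq, hI]
  norm_num

section Slice

open Real Complex ComplexConjugate

variable {I : ℍ}

theorem Quaternion.star_complexLift_apply (hI : I * I = -1) (z : ℂ) :
    star (Complex.lift ⟨I, hI⟩ z) = Complex.lift ⟨I, hI⟩ (conj z) := by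
  have hstar : star I = -I :=
    Quaternion.star_eq_neg.2 (Quaternion.re_eq_zero_of_mul_self_eq_neg_one hI)
  simp [Complex.lift, Complex.liftAux_apply, hstar, Quaternion.algebraMap_def, Quaternion.star_coe]

theorem Quaternion.norm_complexLift_apply (hI : I * I = -1) (z : ℂ) :
    ‖Complex.lift ⟨I, hI⟩ z‖ = ‖z‖ := by
  have h : ((Quaternion.normSq (Complex.lift ⟨I, hI⟩ z) : ℝ) : ℍ) = ((Complex.normSq z : ℝ) : ℍ) := by
    rw [← Quaternion.self_mul_star, Quaternion.star_complexLift_apply hI, ← map_mul, mul_conj]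
    simp [Quaternion.algebraMap_def]
  rw [Quaternion.coe_inj, Quaternion.normSq_eq_norm_mul_self, Complex.normSq_eq_norm_sq] at h
  nlinarith [norm_nonneg (Complex.lift ⟨I, hI⟩ z), norm_nonneg z]

theorem complexLift_ofReal_mul_exp (hI : I * I = -1) (r t : ℝ) :
    Complex.lift ⟨I, hI⟩ (r * exp (t * Complex.I)) = (r : ℍ) * expI I t := by
  simp [Complex.lift, liftAux_apply, Quaternion.algebraMap_def, expI, exp_ofReal_mul_I_re,
    exp_ofReal_mul_I_im, Quaternion.coe_mul_eq_smul, mul_smul]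

theorem norm_ofReal_mul_expI (hI : I * I = -1) {r : ℝ} (hr : 0 ≤ r) (t : ℝ) :
    ‖(r : ℍ) * expI I t‖ = r := by
  rw [← complexLift_ofReal_mul_exp hI, Quaternion.norm_complexLift_apply, norm_mul,
    norm_exp_ofReal_mul_I, norm_real, Real.norm_of_nonneg hr, mul_one]

theorem re_ofReal_mul_expI (hI : I * I = -1) (r t : ℝ) :
    ((r : ℍ) * expI I t).re = r * Real.cos t := by
  simp [expI, Quaternion.re_eq_zero_of_mul_self_eq_neg_one hI]

theorem star_ofReal_mul_expI (hI : I * I = -1) (r t : ℝ) :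
    star ((r : ℍ) * expI I t) = (r : ℍ) * expI I (-t) := by
  rw [← complexLift_ofReal_mul_exp hI, Quaternion.star_complexLift_apply hI,
    ← complexLift_ofReal_mul_exp hI]
  congr 1
  simp [← exp_conj]

theorem integral_ofReal_mul_exp_zpow (r : ℝ) (k : ℤ) :
    ∫ t in (0 : ℝ)..(2 * π), ((r : ℂ) * exp (t * Complex.I)) ^ k =
      if k = 0 then ((2 * π : ℝ) : ℂ) else 0 := by
  split_ifs with hk
  · simp [hk]
  have hc : (k : ℂ) * Complex.I ≠ 0 := mul_ne_zero (by exact_mod_cast hk) I_ne_zero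
  have hexp : ∀ t : ℝ, ((r : ℂ) * exp (t * Complex.I)) ^ k =
      (r : ℂ) ^ k * exp ((k * Complex.I) * t) := by
    intro t
    rw [mul_zpow, ← exp_int_mul]
    ring_nf
  have hperiod : (k : ℂ) * Complex.I * ((2 * π : ℝ) : ℂ) = k * (2 * π * Complex.I) := by
    push_cast; ring
  simp_rw [hexp, intervalIntegral.integral_const_mul, integral_exp_mul_complex hc, hperiod,
    exp_int_mul_two_pi_mul_I]
  simp

theorem integral_mul_inv_pow_mul_pow_mul (hI : I * I = -1) {r : ℝ} (hr : r ≠ 0)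
    (a b : ℍ) (n m : ℕ) :
    ∫ t in (0 : ℝ)..(2 * π), a * (((r : ℍ) * expI I t)⁻¹ ^ n * ((r : ℍ) * expI I t) ^ m) * b =
      if n = m then (2 * π) • (a * b) else 0 := by
  set φ := Complex.lift ⟨I, hI⟩
  let L : ℂ →L[ℝ] ℍ := LinearMap.toContinuousLinearMap
    (LinearMap.mulLeft ℝ a ∘ₗ LinearMap.mulRight ℝ b ∘ₗ φ.toLinearMap)
  have hL : ∀ w, L w = a * φ w * b := fun w => (mul_assoc _ _ _).symm
  have hz : ∀ t : ℝ, (r : ℂ) * exp (t * Complex.I) ≠ 0 := fun t =>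
    mul_ne_zero (by exact_mod_cast hr) (exp_ne_zero _)
  have hpoint : ∀ t : ℝ,
      a * (((r : ℍ) * expI I t)⁻¹ ^ n * ((r : ℍ) * expI I t) ^ m) * b =
        L (((r : ℂ) * exp (t * Complex.I)) ^ ((m : ℤ) - n)) := by
    intro t
    have hne : (r : ℍ) * expI I t ≠ 0 := by
      rw [← complexLift_ofReal_mul_exp hI]
      exact (map_ne_zero φ).2 (hz t)
    rw [hL, map_zpow₀, complexLift_ofReal_mul_exp hI, sub_eq_neg_add, zpow_add₀ hne, zpow_neg,
      zpow_natCast, zpow_natCast, inv_pow]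
  have hint : IntervalIntegrable (fun t : ℝ => ((r : ℂ) * exp (t * Complex.I)) ^ ((m : ℤ) - n))
      MeasureTheory.volume 0 (2 * π) :=
    (Continuous.zpow₀ (by fun_prop) _ fun t => Or.inl (hz t)).intervalIntegrable _ _
  rw [intervalIntegral.integral_congr fun t _ => hpoint t, L.intervalIntegral_comp_comm hint,
    integral_ofReal_mul_exp_zpow, hL]
  simp only [sub_eq_zero, Nat.cast_inj, eq_comm (a := m)]
  split_ifs
  · rw [← coe_algebraMap, AlgHom.commutes, Quaternion.algebraMap_def,
      Quaternion.mul_coe_eq_smul, smul_mul_assoc]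
  · simp

end Slice

def sliceCharPoly (s q : ℍ) : ℍ := q ^ 2 - ((2 * s.re : ℝ) : ℍ) * q + ((‖s‖ ^ 2 : ℝ) : ℍ)

section sliceCharPoly

variable {q s : ℍ}

theorem summable_norm_pow_mul_inv_pow (hq : ‖q‖ < ‖s‖) :
    Summable fun n => ‖q ^ n * s⁻¹ ^ n‖ := by
  have hs : 0 < ‖s‖ := (norm_nonneg q).trans_lt hq
  refine (summable_geometric_of_lt_one (by positivity) ((div_lt_one hs).2 hq)).congr fun n => ?_
  rw [norm_mul, norm_pow, norm_pow, norm_inv, div_pow, div_eq_mul_inv, inv_pow]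

theorem sliceCharPoly_mul_tsum (hq : ‖q‖ < ‖s‖) :
    sliceCharPoly s q * ((∑' n, q ^ n * s⁻¹ ^ n) * s⁻¹) = star s - q := by
  have hs : s ≠ 0 := norm_pos_iff.1 ((norm_nonneg q).trans_lt hq)
  have hK := tsum_pow_mul_pow_eq_one_add (summable_norm_pow_mul_inv_pow hq).of_norm
  have hσ : ((2 * s.re : ℝ) : ℍ) = s + star s := (Quaternion.self_add_star' s).symm
  have hπ : ((‖s‖ ^ 2 : ℝ) : ℍ) = star s * s := by
    rw [Quaternion.star_mul_self, Quaternion.normSq_eq_norm_mul_self, sq]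
  have key := quadratic_mul_eq_of_mul_eq_one_add_mul (q := q)
    (G := (∑' n, q ^ n * s⁻¹ ^ n) * s⁻¹) (s := s)
    (σ := ((2 * s.re : ℝ) : ℍ)) (π := ((‖s‖ ^ 2 : ℝ) : ℍ))
    (by rw [inv_mul_cancel_right₀ hs, ← mul_assoc, ← hK])
    (Quaternion.coe_commutes _ _) (Quaternion.coe_commutes _ _)
    (by rw [hσ, hπ]; noncomm_ring)
  rw [sliceCharPoly, key, hσ]
  abel

theorem sliceCharPoly_ne_zero (hq : ‖q‖ < ‖s‖) : sliceCharPoly s q ≠ 0 := by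
  intro h
  have hstar := sliceCharPoly_mul_tsum hq
  rw [h, zero_mul, eq_comm, sub_eq_zero] at hstar
  rw [← hstar, norm_star] at hq
  exact lt_irrefl _ hq

theorem sliceCharPoly_inv_mul_sub_mul (hq : ‖q‖ < ‖s‖) :
    (sliceCharPoly s q)⁻¹ * (star s - q) * s = ∑' n, q ^ n * s⁻¹ ^ n := by
  have hs : s ≠ 0 := norm_pos_iff.1 ((norm_nonneg q).trans_lt hq)
  rw [← sliceCharPoly_mul_tsum hq, inv_mul_cancel_left₀ (sliceCharPoly_ne_zero hq),
    inv_mul_cancel_right₀ hs]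

theorem hasSum_pow_mul_inv_pow_mul_Fc {c : ℕ → ℍ} (hq : ‖q‖ < ‖s‖)
    (hc : Summable fun n => ‖c n‖ * ‖s‖ ^ n) :
    HasSum (fun p : ℕ × ℕ => q ^ p.1 * (s⁻¹ ^ p.1 * s ^ p.2) * c p.2)
      ((∑' n, q ^ n * s⁻¹ ^ n) * Fc c s) := by
  have hker := summable_norm_pow_mul_inv_pow hq
  have hser : Summable fun m => ‖s ^ m * c m‖ :=
    hc.congr fun m => by rw [norm_mul, norm_pow, mul_comm]
  have hprod := summable_mul_of_summable_norm hker hser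
  rw [Fc, tsum_mul_tsum_of_summable_norm hker hser]
  simpa only [mul_assoc] using hprod.hasSum

end sliceCharPoly

open Real in
theorem integral_tsum_mul_Fc {I : ℍ} (hI : I * I = -1) {c : ℕ → ℍ} {r : ℝ} (hr : 0 < r)
    (hc : Summable fun n => ‖c n‖ * r ^ n) {q : ℍ} (hq : ‖q‖ < r) :
    ∫ t in (0 : ℝ)..(2 * π),
        (∑' n, q ^ n * ((r : ℍ) * expI I t)⁻¹ ^ n) * Fc c ((r : ℍ) * expI I t) =
      (2 * π) • Fc c q := by
  set s : ℝ → ℍ := fun t => (r : ℍ) * expI I t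
  have hs : ∀ t, ‖s t‖ = r := norm_ofReal_mul_expI hI hr.le
  have hs_cont : Continuous s := by
    simp only [s, ← complexLift_ofReal_mul_exp hI]
    exact (Complex.lift ⟨I, hI⟩).toLinearMap.continuous_of_finiteDimensional.comp (by fun_prop)
  have hs_ne : ∀ t, s t ≠ 0 := fun t => norm_pos_iff.1 (by rw [hs]; exact hr)
  have hterms : HasSum
      (fun p : ℕ × ℕ => ∫ t in (0 : ℝ)..(2 * π), q ^ p.1 * ((s t)⁻¹ ^ p.1 * s t ^ p.2) * c p.2)
      (∫ t in (0 : ℝ)..(2 * π), (∑' n, q ^ n * (s t)⁻¹ ^ n) * Fc c (s t)) :=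
    intervalIntegral.hasSum_integral_of_dominated_convergence
      (fun p _ => (‖q‖ / r) ^ p.1 * (‖c p.2‖ * r ^ p.2))
      (fun p => ((continuous_const.mul (((hs_cont.inv₀ hs_ne).pow _).mul (hs_cont.pow _))).mul
        continuous_const).aestronglyMeasurable)
      (fun p => Filter.Eventually.of_forall fun t _ => by
        simp only [norm_mul, norm_pow, norm_inv, hs]
        exact le_of_eq (by rw [div_pow]; ring))
      (Filter.Eventually.of_forall fun _ _ =>
        (summable_geometric_of_lt_one (by positivity) ((div_lt_one hr).2 hq)).mul_of_nonneg hc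
          (fun _ => by positivity) (fun _ => by positivity))
      intervalIntegrable_const
      (Filter.Eventually.of_forall fun t _ =>
        hasSum_pow_mul_inv_pow_mul_Fc (hs t ▸ hq) (by simpa only [hs] using hc))
  have hqc : Summable fun n => q ^ n * c n :=
    .of_norm_bounded hc fun n => by
      rw [norm_mul, norm_pow, mul_comm]
      gcongr
  refine hterms.unique ?_
  simp only [s, integral_mul_inv_pow_mul_pow_mul hI hr.ne']
  exact (hqc.hasSum.const_smul (2 * π)).ite_eq_diag.congr_fun fun p =>
    if_ctx_congr Iff.rfl (fun h => by rw [h]) fun _ => rfl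

/-- the slice regular Cauchy formula on a circle of radius `r`. -/
theorem slice_cauchy_formula (c : ℕ → ℍ) (r : ℝ) (hr : 0 < r)
    (hc : Summable fun n => ‖c n‖ * r ^ n)
    (q : ℍ) (hq : ‖q‖ < r) (I : ℍ) (hI : I ^ 2 = -1) :
    (∀ t : ℝ, IsUnit (q ^ 2 - ((2 * r * Real.cos t : ℝ) : ℍ) * q + ((r ^ 2 : ℝ) : ℍ))) ∧
    Fc c q = (2 * Real.pi)⁻¹ •
      ∫ t in (0 : ℝ)..(2 * Real.pi),
        (q ^ 2 - ((2 * r * Real.cos t : ℝ) : ℍ) * q + ((r ^ 2 : ℝ) : ℍ))⁻¹ *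
          ((r : ℍ) * expI I (-t) - q) * ((r : ℍ) * expI I t) *
          Fc c ((r : ℍ) * expI I t) := by
  have hI' : I * I = -1 := by rw [← sq, hI]
  have hq' : ∀ t : ℝ, ‖q‖ < ‖(r : ℍ) * expI I t‖ := fun t => by
    rwa [norm_ofReal_mul_expI hI' hr.le]
  have hpoly : ∀ t : ℝ, q ^ 2 - ((2 * r * Real.cos t : ℝ) : ℍ) * q + ((r ^ 2 : ℝ) : ℍ) =
      sliceCharPoly ((r : ℍ) * expI I t) q := fun t => by
    rw [sliceCharPoly, re_ofReal_mul_expI hI', norm_ofReal_mul_expI hI' hr.le, mul_assoc]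
  refine ⟨fun t => hpoly t ▸ (sliceCharPoly_ne_zero (hq' t)).isUnit, ?_⟩
  have hkernel : ∀ t : ℝ,
      (q ^ 2 - ((2 * r * Real.cos t : ℝ) : ℍ) * q + ((r ^ 2 : ℝ) : ℍ))⁻¹ *
          ((r : ℍ) * expI I (-t) - q) * ((r : ℍ) * expI I t) =
        ∑' n, q ^ n * ((r : ℍ) * expI I t)⁻¹ ^ n := fun t => by
    rw [hpoly, ← star_ofReal_mul_expI hI', sliceCharPoly_inv_mul_sub_mul (hq' t)]
  simp_rw [hkernel, integral_tsum_mul_Fc hI' hr hc hq, smul_smul,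
    inv_mul_cancel₀ Real.two_pi_pos.ne', one_smul]
end
end

section
/- Let b, c : ℕ → ℍ with Σ_n |b_n| < ∞ and Σ_n |c_n| < ∞. Then for every I ∈ 𝕊: (1/2π) ∫₀^{2π} conj(F_b(e^{It})) · F_c(e^{It}) dt = Σ_n conj(b_n) c_n; in particular this value is independent of the imaginary unit I. -/
noncomputable section

local notation "ℍ" => Quaternion ℝ

/-!
On the slice `ℂ_I = ℝ + ℝ I` the quaternions look like the complex numbers: `I ^ 2 = -1` gives an
`ℝ`-algebra embedding `ℂ → ℍ` sending `e^{it}` to `e^{It}` and commuting with conjugation, since an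
imaginary unit has zero real part. Hence `conj(e^{Imt} x) e^{Int} y = conj(x) e^{I(n-m)t} y`, whose
integral over `[0, 2π]` is `2π conj(x) y` if `m = n` and `0` otherwise. On the unit circle
`conj(F_b) F_c` is a double series dominated by `|b_m| |c_n|`, so it may be integrated term by term,
and only the diagonal survives.
-/

open Real MeasureTheory ComplexConjugate

theorem Quaternion.re_eq_zero_of_sq_eq_neg_one {I : ℍ} (hI : I ^ 2 = -1) : I.re = 0 := by
  have h := hI
  rw [Quaternion.ext_iff, sq] at h
  simp only [Quaternion.re_mul, Quaternion.imI_mul, Quaternion.imJ_mul, Quaternion.imK_mul,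
    Quaternion.re_neg, Quaternion.imI_neg, Quaternion.imJ_neg, Quaternion.imK_neg,
    Quaternion.re_one, Quaternion.imI_one, Quaternion.imJ_one, Quaternion.imK_one] at h
  obtain ⟨hre, hi, hj, hk⟩ := h
  -- the imaginary components say `re * im = 0`, so `re² (re² + 1) = re² |im|² = 0`
  have hsq : I.re ^ 2 ≤ 0 := by nlinarith
  exact pow_eq_zero_iff two_ne_zero |>.mp (le_antisymm hsq (sq_nonneg _))

theorem hasSum_ite_fst_eq_snd_iff {α M : Type*} [DecidableEq α] [AddCommMonoid M]
    [TopologicalSpace M] {f : α × α → M} {a : M} :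
    HasSum (fun p : α × α => if p.1 = p.2 then f p else 0) a ↔ HasSum (fun x => f (x, x)) a := by
  have hdiag : Function.Injective fun x : α => (x, x) := fun _ _ h => congrArg Prod.fst h
  rw [← hdiag.hasSum_iff]
  · simp [Function.comp_def]
  · rintro ⟨x, y⟩ hxy
    exact if_neg fun (h : x = y) => hxy ⟨x, h ▸ rfl⟩

theorem Complex.integral_exp_int_mul_I_mul (k : ℤ) :
    ∫ t in (0 : ℝ)..2 * π, Complex.exp (k * Complex.I * t)
      = if k = 0 then ((2 * π : ℝ) : ℂ) else 0 := by
  split_ifs with hk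
  · simp [hk]
  · have hc : (k : ℂ) * Complex.I ≠ 0 := mul_ne_zero (Int.cast_ne_zero.mpr hk) Complex.I_ne_zero
    rw [integral_exp_mul_complex hc]
    have : (k : ℂ) * Complex.I * ((2 * π : ℝ) : ℂ) = k * (2 * π * Complex.I) := by push_cast; ring
    rw [this, Complex.exp_int_mul_two_pi_mul_I]
    simp

theorem continuous_expI (I : ℍ) : Continuous (expI I) := by
  unfold expI
  exact (Quaternion.continuous_coe.comp continuous_cos).add
    ((Quaternion.continuous_coe.comp continuous_sin).mul continuous_const)

theorem hasSum_star_Fc_mul_Fc {b c : ℕ → ℍ} (hb : Summable fun n => ‖b n‖)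
    (hc : Summable fun n => ‖c n‖) {q : ℍ} (hq : ‖q‖ ≤ 1) :
    HasSum (fun p : ℕ × ℕ => star (q ^ p.1 * b p.1) * (q ^ p.2 * c p.2))
      (star (Fc b q) * Fc c q) := by
  have hle : ∀ (a : ℕ → ℍ) n, ‖q ^ n * a n‖ ≤ ‖a n‖ := fun a n => by
    rw [norm_mul, norm_pow]
    exact mul_le_of_le_one_left (norm_nonneg _) (pow_le_one₀ (norm_nonneg _) hq)
  have hB : Summable fun n => ‖star (q ^ n * b n)‖ :=
    hb.of_nonneg_of_le (fun _ => norm_nonneg _) fun n => (norm_star _).trans_le (hle b n)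
  have hC : Summable fun n => ‖q ^ n * c n‖ :=
    hc.of_nonneg_of_le (fun _ => norm_nonneg _) (hle c)
  rw [Fc, Fc, tsum_star, tsum_mul_tsum_of_summable_norm hB hC]
  exact (summable_mul_of_summable_norm hB hC).hasSum

section ImaginaryUnit

variable {I : ℍ}

def sliceEmbedding (hI : I ^ 2 = -1) : ℂ →ₐ[ℝ] ℍ := Complex.lift ⟨I, by rw [← sq, hI]⟩

theorem sliceEmbedding_apply (hI : I ^ 2 = -1) (z : ℂ) :
    sliceEmbedding hI z = ((z.re : ℝ) : ℍ) + ((z.im : ℝ) : ℍ) * I := by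
  simp [sliceEmbedding, Complex.liftAux_apply, Quaternion.coe_mul_eq_smul]

theorem star_sliceEmbedding (hI : I ^ 2 = -1) (z : ℂ) :
    star (sliceEmbedding hI z) = sliceEmbedding hI (conj z) := by
  rw [sliceEmbedding_apply, sliceEmbedding_apply, star_add, star_mul, Quaternion.star_coe,
    Quaternion.star_coe, Quaternion.star_eq_neg.mpr (Quaternion.re_eq_zero_of_sq_eq_neg_one hI)]
  simp [Quaternion.coe_mul_eq_smul, Quaternion.mul_coe_eq_smul]

theorem expI_eq_sliceEmbedding (hI : I ^ 2 = -1) (t : ℝ) :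
    expI I t = sliceEmbedding hI (Complex.exp (t * Complex.I)) := by
  rw [sliceEmbedding_apply, Complex.exp_ofReal_mul_I_re, Complex.exp_ofReal_mul_I_im, expI]

theorem norm_expI (hI : I ^ 2 = -1) (t : ℝ) : ‖expI I t‖ = 1 := by
  have h : expI I t * star (expI I t) = 1 := by
    rw [expI_eq_sliceEmbedding hI, star_sliceEmbedding, ← map_mul, Complex.mul_conj,
      Complex.normSq_eq_norm_sq, Complex.norm_exp_ofReal_mul_I]
    simp
  have := congrArg norm h
  rw [norm_mul, norm_star, norm_one] at this
  nlinarith [norm_nonneg (expI I t)]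

theorem star_expI_pow_mul_expI_pow (hI : I ^ 2 = -1) (m n : ℕ) (t : ℝ) :
    star (expI I t ^ m) * expI I t ^ n
      = sliceEmbedding hI (Complex.exp ((((n : ℤ) - m : ℤ) * Complex.I) * t)) := by
  rw [expI_eq_sliceEmbedding hI, ← map_pow, ← map_pow, star_sliceEmbedding, ← map_mul, map_pow,
    ← Complex.exp_conj, ← Complex.exp_nat_mul, ← Complex.exp_nat_mul, ← Complex.exp_add]
  congr 2
  simp only [map_mul, Complex.conj_ofReal, Complex.conj_I, Int.cast_sub, Int.cast_natCast]
  ring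

theorem integral_star_expI_pow_mul_mul_expI_pow_mul (hI : I ^ 2 = -1) (x y : ℍ) (m n : ℕ) :
    ∫ t in (0 : ℝ)..2 * π, star (expI I t ^ m * x) * (expI I t ^ n * y)
      = if m = n then (2 * π) • (star x * y) else 0 := by
  let L : ℂ →L[ℝ] ℍ := (ContinuousLinearMap.mulLeftRight ℝ ℍ (star x) y).comp
    (sliceEmbedding hI).toLinearMap.toContinuousLinearMap
  have hL : ∀ z, L z = star x * sliceEmbedding hI z * y := fun _ => rfl
  have hpoint : ∀ t : ℝ, star (expI I t ^ m * x) * (expI I t ^ n * y)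
      = L (Complex.exp ((((n : ℤ) - m : ℤ) * Complex.I) * t)) := by
    intro t
    rw [hL, ← star_expI_pow_mul_expI_pow hI, star_mul]
    noncomm_ring
  simp_rw [hpoint]
  rw [L.intervalIntegral_comp_comm (Continuous.intervalIntegrable (by fun_prop) _ _),
    Complex.integral_exp_int_mul_I_mul, hL]
  by_cases hmn : m = n
  · subst hmn
    rw [if_pos (sub_self _), if_pos rfl, ← Complex.coe_algebraMap, AlgHom.commutes,
      Algebra.algebraMap_eq_smul_one, mul_smul_comm, mul_one, smul_mul_assoc]
  · simp [hmn, sub_eq_zero, Ne.symm hmn]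

end ImaginaryUnit

theorem hasSum_intervalIntegral_star_Fc_mul_Fc {b c : ℕ → ℍ} (hb : Summable fun n => ‖b n‖)
    (hc : Summable fun n => ‖c n‖) {I : ℍ} (hI : I ^ 2 = -1) (t₀ t₁ : ℝ) :
    HasSum
      (fun p : ℕ × ℕ => ∫ t in t₀..t₁, star (expI I t ^ p.1 * b p.1) * (expI I t ^ p.2 * c p.2))
      (∫ t in t₀..t₁, star (Fc b (expI I t)) * Fc c (expI I t)) := by
  have hterm : ∀ (p : ℕ × ℕ) t, ‖star (expI I t ^ p.1 * b p.1) * (expI I t ^ p.2 * c p.2)‖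
      = ‖b p.1‖ * ‖c p.2‖ := fun p t => by
    simp only [norm_mul, norm_star, norm_pow, norm_expI hI, one_pow, one_mul]
  exact intervalIntegral.hasSum_integral_of_dominated_convergence (fun p _ => ‖b p.1‖ * ‖c p.2‖)
    (fun p => Continuous.aestronglyMeasurable <|
      (((continuous_expI I).pow _).mul continuous_const).star.mul
        (((continuous_expI I).pow _).mul continuous_const))
    (fun p => ae_of_all _ fun t _ => (hterm p t).le)
    (ae_of_all _ fun _ _ => hb.mul_of_nonneg hc (fun _ => norm_nonneg _) fun _ => norm_nonneg _)
    intervalIntegrable_const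
    (ae_of_all _ fun t _ => hasSum_star_Fc_mul_Fc hb hc (norm_expI hI t).le)

/-- the boundary inner product on any slice circle equals
`Σ_n conj(b_n) c_n`, independently of the imaginary unit `I`. -/
theorem boundary_inner_product (b c : ℕ → ℍ)
    (hb : Summable fun n => ‖b n‖) (hc : Summable fun n => ‖c n‖)
    (I : ℍ) (hI : I ^ 2 = -1) :
    (2 * Real.pi)⁻¹ •
        ∫ t in (0 : ℝ)..(2 * Real.pi), star (Fc b (expI I t)) * Fc c (expI I t)
      = ∑' n, star (b n) * c n := by
  have hsum := hasSum_intervalIntegral_star_Fc_mul_Fc hb hc hI 0 (2 * π)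
  simp only [integral_star_expI_pow_mul_mul_expI_pow_mul hI] at hsum
  rw [hasSum_ite_fst_eq_snd_iff] at hsum
  rw [← hsum.tsum_eq, tsum_const_smul'', inv_smul_smul₀ (by positivity)]
end
end

section
/- (Orthonormality of the slice Takenaka–Malmquist system.) Let a_1, a_2, … ∈ 𝔹. Then the slice Takenaka–Malmquist sequences are orthonormal in ℓ²(ℕ,ℍ): for all k, l ≥ 1, ⟨τ_k, τ_l⟩ = 1 if k = l and ⟨τ_k, τ_l⟩ = 0 if k ≠ l. -/
noncomputable section

local notation "ℍ" => Quaternion ℝ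

/-!
The Cauchy product `β(a) ⋆ c = Σ_m (S^m β(a)) c_m` is a superposition of the right shifts
`S^m β(a)` (`shiftSeq m`) of `β(a)`, so `⟨β(a) ⋆ c, e⟩ = Σ_m ⟨S^m β(a), e⟩ c_m`. Writing
`β(a) = (a δ - √(1-|a|²) S ε(a)) u` with a unit `u` commuting with `a`, all inner products of shifts
reduce to the geometric series `Σ_k conj(ε(a)_{k+p}) ε(a)_k = a^p`: the shifts `S^m β(a)` are
orthonormal and orthogonal to `ε(a)`. Hence `c ↦ β(a) ⋆ c` is an isometry with range orthogonal to
`ε(a)`, and since `τ_{k+1}(a_0, a_1, …) = β(a_0) ⋆ τ_k(a_1, a_2, …)`, orthonormality follows by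
induction on `k`.
-/

open Finset

def qInner (c d : ℕ → ℍ) : ℍ := ∑' n, star (d n) * c n

def shiftSeq (m : ℕ) (b : ℕ → ℍ) : ℕ → ℍ := fun n => if m ≤ n then b (n - m) else 0

lemma star_qInner (c d : ℕ → ℍ) : star (qInner c d) = qInner d c := by
  simp only [qInner, tsum_star, star_mul, star_star]

lemma qInner_shiftSeq (m : ℕ) (b e : ℕ → ℍ) :
    qInner (shiftSeq m b) e = ∑' k, star (e (k + m)) * b k := by
  rw [qInner, ← (add_left_injective m).tsum_eq]
  · simp [shiftSeq]
  · intro n hn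
    by_cases h : m ≤ n
    · exact ⟨n - m, Nat.sub_add_cancel h⟩
    · simp [shiftSeq, h] at hn

lemma qInner_shiftSeq_add_shiftSeq (p m : ℕ) (b : ℕ → ℍ) :
    qInner (shiftSeq (p + m) b) (shiftSeq m b) = qInner (shiftSeq p b) b := by
  simp only [qInner_shiftSeq, shiftSeq, ← add_assoc, Nat.le_add_left, if_true, Nat.add_sub_cancel]

lemma norm_le_tsum_norm {c : ℕ → ℍ} (hc : Summable (‖c ·‖)) (n : ℕ) : ‖c n‖ ≤ ∑' k, ‖c k‖ :=
  hc.le_tsum n fun _ _ => norm_nonneg _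

lemma norm_shiftSeq_le {b : ℕ → ℍ} (hb : Summable (‖b ·‖)) (m n : ℕ) :
    ‖shiftSeq m b n‖ ≤ ∑' k, ‖b k‖ := by
  unfold shiftSeq
  split_ifs
  · exact norm_le_tsum_norm hb _
  · simpa using tsum_nonneg fun k => norm_nonneg (b k)

lemma summable_norm_cprod {b c : ℕ → ℍ} (hb : Summable (‖b ·‖)) (hc : Summable (‖c ·‖)) :
    Summable (‖cprod b c ·‖) :=
  summable_norm_sum_mul_range_of_summable_norm hb hc

lemma cprod_eq_sum_antidiagonal (b c : ℕ → ℍ) (n : ℕ) :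
    cprod b c n = ∑ kl ∈ antidiagonal n, b kl.1 * c kl.2 :=
  (Nat.sum_antidiagonal_eq_sum_range_succ (fun k l => b k * c l) n).symm

lemma tsum_sum_antidiagonal {F : ℕ × ℕ → ℍ} (hF : Summable F) :
    ∑' n, ∑ kl ∈ antidiagonal n, F kl = ∑' p, F p := by
  let σ := HasAntidiagonal.sigmaAntidiagonalEquivProd (A := ℕ)
  calc ∑' n, ∑ kl ∈ antidiagonal n, F kl = ∑' n, ∑' kl : antidiagonal n, F kl :=
        tsum_congr fun n => (Finset.tsum_subtype _ F).symm
    _ = ∑' c, F (σ c) := ((σ.summable_iff.mpr hF).tsum_sigma).symm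
    _ = ∑' p, F p := σ.tsum_eq F

theorem qInner_cprod {e b c : ℕ → ℍ} {C : ℝ} (he : ∀ n, ‖e n‖ ≤ C)
    (hb : Summable (‖b ·‖)) (hc : Summable (‖c ·‖)) :
    qInner (cprod b c) e = ∑' m, qInner (shiftSeq m b) e * c m := by
  set F : ℕ × ℕ → ℍ := fun p => star (e (p.1 + p.2)) * (b p.1 * c p.2)
  have hF : Summable F := by
    refine .of_norm_bounded ((hb.mul_norm hc).mul_left C) fun p => ?_
    rw [norm_mul, norm_star]
    exact mul_le_mul_of_nonneg_right (he _) (norm_nonneg _)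
  calc qInner (cprod b c) e = ∑' n, ∑ kl ∈ antidiagonal n, F kl := by
        refine tsum_congr fun n => ?_
        rw [cprod_eq_sum_antidiagonal, mul_sum]
        exact sum_congr rfl fun kl hkl => by rw [← mem_antidiagonal.mp hkl]
    _ = ∑' m, ∑' k, F (k, m) := by
        rw [tsum_sum_antidiagonal hF, hF.tsum_prod, (hF.tsum_comm (f := fun k m => F (k, m)))]
    _ = ∑' m, qInner (shiftSeq m b) e * c m := by
        refine tsum_congr fun m => ?_
        simp only [F, qInner_shiftSeq, ← tsum_mul_right, mul_assoc]

lemma qInner_shiftSeq_shiftSeq {b : ℕ → ℍ}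
    (hbb : ∀ p, qInner (shiftSeq p b) b = if p = 0 then 1 else 0) (l m : ℕ) :
    qInner (shiftSeq l b) (shiftSeq m b) = if l = m then 1 else 0 := by
  rcases le_total m l with hml | hlm
  · obtain ⟨p, rfl⟩ := Nat.exists_eq_add_of_le' hml
    rw [qInner_shiftSeq_add_shiftSeq, hbb]
    simp
  · obtain ⟨p, rfl⟩ := Nat.exists_eq_add_of_le' hlm
    rw [← star_qInner, qInner_shiftSeq_add_shiftSeq, hbb]
    rcases eq_or_ne p 0 with rfl | hp <;> simp [*]

theorem qInner_cprod_cprod {b : ℕ → ℍ}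
    (hbb : ∀ p, qInner (shiftSeq p b) b = if p = 0 then 1 else 0) (hb : Summable (‖b ·‖))
    {c d : ℕ → ℍ} (hc : Summable (‖c ·‖)) (hd : Summable (‖d ·‖)) :
    qInner (cprod b c) (cprod b d) = qInner c d := by
  have hshift (m : ℕ) : qInner (shiftSeq m b) (cprod b d) = star (d m) := by
    rw [← star_qInner, qInner_cprod (norm_shiftSeq_le hb m) hb hd]
    simp_rw [qInner_shiftSeq_shiftSeq hbb, ite_mul, one_mul, zero_mul, tsum_ite_eq]
  rw [qInner_cprod (norm_le_tsum_norm (summable_norm_cprod hb hd)) hb hc]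
  simp_rw [hshift]
  rfl

lemma PowerSeries.mk_injective {R : Type*} [Semiring R] :
    Function.Injective (PowerSeries.mk : (ℕ → R) → PowerSeries R) :=
  fun b c h => funext fun n => by simpa using congrArg (PowerSeries.coeff n) h

lemma mk_cprod (b c : ℕ → ℍ) :
    PowerSeries.mk (cprod b c) = PowerSeries.mk b * PowerSeries.mk c := by
  ext n : 1
  simp only [PowerSeries.coeff_mk, PowerSeries.coeff_mul, cprod_eq_sum_antidiagonal]

lemma mk_deltaSeq : PowerSeries.mk deltaSeq = 1 := by
  ext n : 1
  simp [deltaSeq, PowerSeries.coeff_one]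

lemma cprod_assoc (b c d : ℕ → ℍ) : cprod (cprod b c) d = cprod b (cprod c d) :=
  PowerSeries.mk_injective <| by simp only [mk_cprod, mul_assoc]

lemma deltaSeq_cprod (c : ℕ → ℍ) : cprod deltaSeq c = c :=
  PowerSeries.mk_injective <| by rw [mk_cprod, mk_deltaSeq, one_mul]

lemma cprod_deltaSeq (c : ℕ → ℍ) : cprod c deltaSeq = c :=
  PowerSeries.mk_injective <| by rw [mk_cprod, mk_deltaSeq, mul_one]

lemma star_mul_mul_of_commute {R : Type*} [Monoid R] [Star R] {u x : R} (hu : star u * u = 1)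
    (hx : Commute u x) : star u * x * u = x := by
  rw [mul_assoc, ← hx.eq, ← mul_assoc, hu, one_mul]

lemma star_mul_self_eq (a : ℍ) : star a * a = ((‖a‖ ^ 2 : ℝ) : ℍ) := by
  rw [Quaternion.star_mul_self, Quaternion.normSq_eq_norm_mul_self, sq]

lemma pow_mul_star_pow (a : ℍ) (k : ℕ) : a ^ k * star a ^ k = (((‖a‖ ^ 2) ^ k : ℝ) : ℍ) := by
  rw [← Commute.mul_pow (star_comm_self' a).symm, ← star_comm_self', star_mul_self_eq]
  norm_cast

section Blaschke

variable {a : ℍ}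

lemma star_eps (a : ℍ) (n : ℕ) : star (eps a n) = √(1 - ‖a‖ ^ 2) • a ^ n := by
  rw [eps, Quaternion.star_smul, star_pow, star_star]

lemma sqrt_one_sub_sq_mul_self (ha : ‖a‖ ≤ 1) :
    √(1 - ‖a‖ ^ 2) * √(1 - ‖a‖ ^ 2) = 1 - ‖a‖ ^ 2 :=
  Real.mul_self_sqrt (by nlinarith [norm_nonneg a])

lemma hasSum_star_eps_add_mul_eps (ha : ‖a‖ < 1) (p : ℕ) :
    HasSum (fun k => star (eps a (k + p)) * eps a k) (a ^ p) := by
  have hr : ‖a‖ ^ 2 < 1 := by nlinarith [norm_nonneg a]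
  have hgeom := (hasSum_geometric_of_lt_one (sq_nonneg ‖a‖) hr).mul_left
    (√(1 - ‖a‖ ^ 2) * √(1 - ‖a‖ ^ 2))
  convert hgeom.smul_const (a ^ p) using 1
  · funext k
    rw [star_eps, eps, smul_mul_smul_comm, add_comm k p, pow_add, mul_assoc, pow_mul_star_pow,
      Quaternion.mul_coe_eq_smul, smul_smul]
  · rw [sqrt_one_sub_sq_mul_self ha.le, mul_inv_cancel₀ (by linarith), one_smul]

-- `u = a/|a|`, and `u = -1` when `a = 0` (where `B_0(q) = q`).
lemma exists_betaC_eq (ha : ‖a‖ ≤ 1) : ∃ u : ℍ, star u * u = 1 ∧ Commute u a ∧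
    betaC a 0 = a * u ∧ ∀ n, betaC a (n + 1) = -(√(1 - ‖a‖ ^ 2) • eps a n) * u := by
  by_cases h0 : a = 0
  · subst h0
    refine ⟨-1, by simp, Commute.zero_right _, by simp [betaC], fun n => ?_⟩
    rcases n with _ | n <;> simp [betaC, eps]
  · have hu : a / (‖a‖ : ℍ) = ‖a‖⁻¹ • a := by
      rw [div_eq_mul_inv, ← Quaternion.coe_inv, Quaternion.mul_coe_eq_smul]
    refine ⟨‖a‖⁻¹ • a, ?_, (Commute.refl a).smul_left _, ?_, fun n => ?_⟩
    · have h : ‖a‖ ≠ 0 := norm_ne_zero_iff.mpr h0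
      rw [Quaternion.star_smul, smul_mul_smul_comm, Quaternion.star_mul_self,
        Quaternion.normSq_eq_norm_mul_self, Quaternion.smul_coe, ← Quaternion.coe_one]
      congr 1
      field_simp
    · rw [betaC, if_neg h0, if_pos rfl, sq, mul_div_assoc, hu]
    · rw [betaC, if_neg h0, if_neg n.succ_ne_zero, Nat.add_sub_cancel, hu, eps, smul_smul,
        sqrt_one_sub_sq_mul_self ha, Quaternion.mul_coe_eq_smul, neg_mul]

lemma qInner_shiftSeq_betaC (ha : ‖a‖ < 1) (p : ℕ) :
    qInner (shiftSeq p (betaC a)) (betaC a) = if p = 0 then 1 else 0 := by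
  obtain ⟨u, hu, hua, hβ₀, hβ⟩ := exists_betaC_eq ha.le
  set s := √(1 - ‖a‖ ^ 2)
  have htail : HasSum (fun k => star (betaC a (k + 1 + p)) * betaC a (k + 1))
      ((s * s) • a ^ p) := by
    have h :=
      (((hasSum_star_eps_add_mul_eps ha p).const_smul (s * s)).mul_left (star u)).mul_right u
    rw [mul_smul_comm, smul_mul_assoc, star_mul_mul_of_commute hu (hua.pow_right p)] at h
    refine h.congr_fun fun k => ?_
    rw [add_right_comm, hβ, hβ]
    simp only [star_mul, star_neg, Quaternion.star_smul, mul_neg, neg_mul, smul_neg, neg_neg,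
      smul_mul_assoc, mul_smul_comm, smul_smul, mul_assoc]
  have hs : s * s = 1 - ‖a‖ ^ 2 := sqrt_one_sub_sq_mul_self ha.le
  have hhead : (if p = 0 then 1 else 0) - star (betaC a p) * betaC a 0 = (s * s) • a ^ p := by
    rcases p with _ | q
    · rw [hβ₀, star_mul, mul_assoc, ← mul_assoc (star a), star_mul_self_eq, ← mul_assoc,
        star_mul_mul_of_commute hu (Quaternion.coe_commute _ _).symm, hs, pow_zero, if_pos rfl,
        sub_smul, one_smul, ← Quaternion.coe_mul_eq_smul, mul_one]
    · rw [hβ, hβ₀, if_neg q.succ_ne_zero]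
      simp only [star_mul, star_neg, Quaternion.star_smul, star_eps, neg_mul, smul_mul_assoc,
        mul_smul_comm, smul_smul, mul_assoc]
      rw [zero_sub, neg_neg, ← mul_assoc (a ^ q), ← pow_succ, ← mul_assoc,
        star_mul_mul_of_commute hu (hua.pow_right _)]
  rw [qInner_shiftSeq]
  refine ((hasSum_nat_add_iff' 1).mp ?_).tsum_eq
  rwa [sum_range_one, zero_add, hhead]

lemma qInner_shiftSeq_betaC_eps (ha : ‖a‖ < 1) (m : ℕ) :
    qInner (shiftSeq m (betaC a)) (eps a) = 0 := by
  obtain ⟨u, -, -, hβ₀, hβ⟩ := exists_betaC_eq ha.le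
  set s := √(1 - ‖a‖ ^ 2)
  have htail : HasSum (fun k => star (eps a (k + 1 + m)) * betaC a (k + 1))
      (-(s • a ^ (m + 1)) * u) := by
    have h := (((hasSum_star_eps_add_mul_eps ha (m + 1)).const_smul s).neg).mul_right u
    refine h.congr_fun fun k => ?_
    rw [add_assoc, add_comm 1 m, hβ]
    simp only [mul_neg, neg_mul, mul_smul_comm, smul_mul_assoc, mul_assoc]
  rw [qInner_shiftSeq]
  refine ((hasSum_nat_add_iff' 1).mp ?_).tsum_eq
  rwa [sum_range_one, zero_add, hβ₀, star_eps, zero_sub, smul_mul_assoc, ← mul_assoc, ← pow_succ,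
    ← smul_mul_assoc, ← neg_mul]

lemma qInner_eps_eps (ha : ‖a‖ < 1) : qInner (eps a) (eps a) = 1 := by
  simpa [qInner] using (hasSum_star_eps_add_mul_eps ha 0).tsum_eq

lemma summable_norm_eps (ha : ‖a‖ < 1) : Summable (‖eps a ·‖) := by
  simp_rw [eps, norm_smul, norm_pow, Quaternion.norm_star]
  exact (summable_geometric_of_lt_one (norm_nonneg a) ha).mul_left _

lemma summable_norm_betaC (ha : ‖a‖ < 1) : Summable (‖betaC a ·‖) := by
  obtain ⟨u, -, -, -, hβ⟩ := exists_betaC_eq ha.le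
  refine (summable_nat_add_iff 1).mp ?_
  simp_rw [hβ, norm_mul, norm_neg, norm_smul]
  exact ((summable_norm_eps ha).mul_left _).mul_right _

lemma qInner_cprod_betaC_eps (ha : ‖a‖ < 1) {c : ℕ → ℍ} (hc : Summable (‖c ·‖)) :
    qInner (cprod (betaC a) c) (eps a) = 0 := by
  rw [qInner_cprod (norm_le_tsum_norm (summable_norm_eps ha)) (summable_norm_betaC ha) hc]
  simp [qInner_shiftSeq_betaC_eps ha]

end Blaschke

lemma Bprod_succ' (a : ℕ → ℍ) (k : ℕ) :
    Bprod a (k + 1) = cprod (betaC (a 0)) (Bprod (fun i => a (i + 1)) k) := by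
  induction k with
  | zero => exact (deltaSeq_cprod _).trans (cprod_deltaSeq _).symm
  | succ k ih => rw [Bprod, ih, cprod_assoc]; rfl

lemma tau_zero (a : ℕ → ℍ) : tau a 0 = eps (a 0) :=
  deltaSeq_cprod _

lemma tau_succ (a : ℕ → ℍ) (k : ℕ) :
    tau a (k + 1) = cprod (betaC (a 0)) (tau (fun i => a (i + 1)) k) := by
  rw [tau, Bprod_succ', cprod_assoc]
  rfl

lemma summable_norm_deltaSeq : Summable (‖deltaSeq ·‖) :=
  (summable_nat_add_iff 1).mp <| by simp [deltaSeq]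

lemma summable_norm_Bprod {a : ℕ → ℍ} (ha : ∀ k, ‖a k‖ < 1) : ∀ k, Summable (‖Bprod a k ·‖)
  | 0 => summable_norm_deltaSeq
  | k + 1 => summable_norm_cprod (summable_norm_Bprod ha k) (summable_norm_betaC (ha k))

lemma summable_norm_tau {a : ℕ → ℍ} (ha : ∀ k, ‖a k‖ < 1) (k : ℕ) : Summable (‖tau a k ·‖) :=
  summable_norm_cprod (summable_norm_Bprod ha k) (summable_norm_eps (ha k))

/-- the slice Takenaka–Malmquist system is orthonormal in `ℓ²(ℕ, ℍ)`
(0-indexed: `tau a k` corresponds to `T_{k+1}`). -/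
theorem tm_orthonormal (a : ℕ → ℍ) (ha : ∀ k, ‖a k‖ < 1) (k l : ℕ) :
    (∑' n, star (tau a l n) * tau a k n) = if k = l then 1 else 0 := by
  change qInner (tau a k) (tau a l) = _
  induction k generalizing a l with
  | zero =>
    cases l with
    | zero => simpa [tau_zero] using qInner_eps_eps (ha 0)
    | succ l =>
      rw [tau_zero, tau_succ, ← star_qInner,
        qInner_cprod_betaC_eps (ha 0) (summable_norm_tau (fun i => ha (i + 1)) l)]
      simp
  | succ k ih =>
    have hτ := summable_norm_tau (a := fun i => a (i + 1)) fun i => ha (i + 1)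
    cases l with
    | zero =>
      rw [tau_zero, tau_succ, qInner_cprod_betaC_eps (ha 0) (hτ k)]
      simp
    | succ l =>
      rw [tau_succ, tau_succ, qInner_cprod_cprod (qInner_shiftSeq_betaC (ha 0))
        (summable_norm_betaC (ha 0)) (hτ k) (hτ l), ih _ (fun i => ha (i + 1)) l]
      simp
end
end

section
/- (Splitting lemma.) Let I, J ∈ 𝕊 with IJ = −JI, and let φ_I : ℂ → ℍ be the real-algebra embedding determined by φ_I(i) = I. Let Ω ⊂ ℂ be open and let f : Ω → ℍ be continuously real-differentiable. Then ∂_x f(z) + I·∂_y f(z) = 0 for all z = x + iy ∈ Ω if and only if there exist holomorphic functions F, G : Ω → ℂ such that f(z) = φ_I(F(z)) + φ_I(G(z))·J for all z ∈ Ω. -/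
/-!
With `φ = φ_I`, the real-linear map `(a, b) ↦ φ a + φ b * J` from `ℂ × ℂ` to `ℍ` is injective,
hence bijective by counting dimensions, because commuting with `I` separates `ℂ_I` from `ℂ_I J`
(here `IJ = -JI` is used). It turns multiplication by `i` into left multiplication by `I`, since
`φ` is multiplicative. So if `f = φ ∘ F + (φ ∘ G) J`, then `∂_x f + I ∂_y f` is the image of
`(∂_x F + i ∂_y F, ∂_x G + i ∂_y G)`, and the splitting lemma becomes the Cauchy–Riemann equations
for the pair `(F, G)`.
-/

noncomputable section
local notation "ℍ" => Quaternion ℝ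

def phiI (I : ℍ) (z : ℂ) : ℍ := ((z.re : ℝ) : ℍ) + ((z.im : ℝ) : ℍ) * I

theorem add_I_smul_eq_zero_iff {E : Type*} [AddCommGroup E] [Module ℂ E] (v w : E) :
    v + Complex.I • w = 0 ↔ w = Complex.I • v := by
  constructor
  · intro h
    calc w = -(Complex.I • Complex.I • w) := by
          rw [smul_smul, Complex.I_mul_I, neg_one_smul, neg_neg]
      _ = Complex.I • v := by rw [← smul_neg, ← eq_neg_of_add_eq_zero_left h]
  · rintro rfl
    rw [smul_smul, Complex.I_mul_I, neg_one_smul, add_neg_cancel]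

section Split

variable {I : ℍ} (hI : I * I = -1)

theorem liftAux_apply_eq_phiI (z : ℂ) : Complex.liftAux I hI z = phiI I z := by
  simp [Complex.liftAux_apply, phiI, Quaternion.coe_mul_eq_smul]

def splitLinearMap (J : ℍ) : ℂ × ℂ →ₗ[ℝ] ℍ :=
  (Complex.liftAux I hI).toLinearMap.coprod
    (LinearMap.mulRight ℝ J ∘ₗ (Complex.liftAux I hI).toLinearMap)

theorem splitLinearMap_apply (J : ℍ) (p : ℂ × ℂ) :
    splitLinearMap hI J p = Complex.liftAux I hI p.1 + Complex.liftAux I hI p.2 * J :=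
  rfl

theorem splitLinearMap_apply_eq_phiI (J : ℍ) (p : ℂ × ℂ) :
    splitLinearMap hI J p = phiI I p.1 + phiI I p.2 * J := by
  simp only [splitLinearMap_apply, liftAux_apply_eq_phiI]

theorem splitLinearMap_I_smul (J : ℍ) (p : ℂ × ℂ) :
    splitLinearMap hI J (Complex.I • p) = I * splitLinearMap hI J p := by
  simp only [splitLinearMap_apply, Prod.smul_fst, Prod.smul_snd, smul_eq_mul, map_mul,
    Complex.liftAux_apply_I, mul_add, mul_assoc]

theorem splitLinearMap_injective {J : ℍ} (hJ : J ≠ 0) (hIJ : I * J = -(J * I)) :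
    Function.Injective (splitLinearMap hI J) := by
  set φ := Complex.liftAux I hI
  have hI0 : I ≠ 0 := by rintro rfl; simp at hI
  have hφI (a : ℂ) : I * φ a = φ a * I := by
    rw [← Complex.liftAux_apply_I I hI, ← map_mul, ← map_mul, mul_comm]
  rw [← LinearMap.ker_eq_bot, LinearMap.ker_eq_bot']
  rintro ⟨a, b⟩ hab
  rw [splitLinearMap_apply] at hab
  have hφ : Function.Injective φ := φ.toRingHom.injective
  have hJI : J * I = -(I * J) := by rw [hIJ, neg_neg]
  -- the commutator with `I` kills `φ a` and doubles `φ b * J`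
  have hb : (2 : ℝ) • (φ b * I * J) = 0 := by
    calc (2 : ℝ) • (φ b * I * J) = (I * φ a - φ a * I) + I * φ b * J - φ b * (J * I) := by
          rw [two_smul, hφI a, hφI b, hJI]; noncomm_ring
      _ = I * (φ a + φ b * J) - (φ a + φ b * J) * I := by noncomm_ring
      _ = 0 := by rw [hab, mul_zero, zero_mul, sub_zero]
  simp only [smul_eq_zero, two_ne_zero, mul_eq_zero, hI0, hJ, or_false, false_or] at hb
  have hb0 : b = 0 := (map_eq_zero_iff φ hφ).mp hb
  rw [hb, zero_mul, add_zero] at hab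
  have ha0 : a = 0 := (map_eq_zero_iff φ hφ).mp hab
  rw [ha0, hb0, Prod.mk_zero_zero]

variable {J : ℍ} (hJ : J ≠ 0) (hIJ : I * J = -(J * I))

def splitEquiv : (ℂ × ℂ) ≃L[ℝ] ℍ :=
  (LinearMap.linearEquivOfInjective (splitLinearMap hI J) (splitLinearMap_injective hI hJ hIJ)
    (by rw [Module.finrank_prod, Complex.finrank_real_complex, Quaternion.finrank_eq_four])
  ).toContinuousLinearEquiv

theorem splitEquiv_apply (p : ℂ × ℂ) : splitEquiv hI hJ hIJ p = splitLinearMap hI J p :=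
  rfl

theorem fderivWithin_add_mul_eq_zero_iff_differentiableOn {Ω : Set ℂ} (hΩ : IsOpen Ω)
    {f : ℂ → ℍ} {g : ℂ → ℂ × ℂ} (hg : DifferentiableOn ℝ g Ω)
    (hfg : Set.EqOn f (splitEquiv hI hJ hIJ ∘ g) Ω) :
    (∀ z ∈ Ω, fderivWithin ℝ f Ω z 1 + I * fderivWithin ℝ f Ω z Complex.I = 0) ↔
      DifferentiableOn ℂ g Ω := by
  refine forall₂_congr fun z hz => ?_
  have hΩz := hΩ.uniqueDiffWithinAt (𝕜 := ℝ) hz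
  rw [differentiableWithinAt_complex_iff_differentiableWithinAt_real hΩz,
    and_iff_right (hg z hz), fderivWithin_congr hfg (hfg hz),
    (splitEquiv hI hJ hIJ).comp_fderivWithin hΩz]
  simp only [ContinuousLinearMap.comp_apply, ContinuousLinearEquiv.coe_coe, splitEquiv_apply]
  rw [← splitLinearMap_I_smul, ← map_add, map_eq_zero_iff _ (splitLinearMap_injective hI hJ hIJ),
    add_I_smul_eq_zero_iff]

end Split

/-- the splitting lemma: a continuously real-differentiable
`f : Ω → ℍ` satisfies `(∂_x + I ∂_y) f = 0` on `Ω` iff `f = φ_I ∘ F + (φ_I ∘ G)·J`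
for holomorphic `F, G : Ω → ℂ`, where `I, J` are anticommuting imaginary units. -/
theorem splitting_lemma (I J : ℍ) (hI : I ^ 2 = -1) (hJ : J ^ 2 = -1)
    (hIJ : I * J = -(J * I)) (Ω : Set ℂ) (hΩ : IsOpen Ω)
    (f : ℂ → ℍ) (hf : ContDiffOn ℝ 1 f Ω) :
    (∀ z ∈ Ω, fderivWithin ℝ f Ω z 1 + I * fderivWithin ℝ f Ω z Complex.I = 0) ↔
    (∃ F G : ℂ → ℂ, DifferentiableOn ℂ F Ω ∧ DifferentiableOn ℂ G Ω ∧
      ∀ z ∈ Ω, f z = phiI I (F z) + phiI I (G z) * J) := by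
  have hI' : I * I = -1 := by rw [← sq, hI]
  have hJ0 : J ≠ 0 := by rintro rfl; norm_num at hJ
  set Φ := splitEquiv hI' hJ0 hIJ
  constructor
  · intro hCR
    have hfg : Set.EqOn f (Φ ∘ (Φ.symm ∘ f)) Ω := fun z _ => (Φ.apply_symm_apply (f z)).symm
    have hg : DifferentiableOn ℂ (Φ.symm ∘ f) Ω :=
      (fderivWithin_add_mul_eq_zero_iff_differentiableOn hI' hJ0 hIJ hΩ
        (Φ.symm.differentiable.comp_differentiableOn (hf.differentiableOn one_ne_zero)) hfg).mp hCR
    refine ⟨fun z => (Φ.symm (f z)).1, fun z => (Φ.symm (f z)).2, hg.fst, hg.snd, fun z hz => ?_⟩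
    rw [← splitLinearMap_apply_eq_phiI hI']
    exact hfg hz
  · rintro ⟨F, G, hF, hG, hfFG⟩
    refine (fderivWithin_add_mul_eq_zero_iff_differentiableOn hI' hJ0 hIJ hΩ
      ((hF.prodMk hG).restrictScalars ℝ) fun z hz => ?_).mpr (hF.prodMk hG)
    rw [hfFG z hz]
    exact (splitLinearMap_apply_eq_phiI hI' J (F z, G z)).symm
end
end
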